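/- arXiv:1208.1014 — 2 statements merged into one kernel-verified Lean document; each statement's English description precedes it below -/
import Mathlib

section
/- Let g : ℝ → ℝ be smooth with g > 0 on an open interval I. If the second derivative of x ↦ g(x)^{-1/4} vanishes identically on I, then (g')⁴/g⁵ is constant on I. Conversely, if g' is nowhere zero on I and (g')⁴/g⁵ is constant on I, then d²/dx²[g^{-1/4}] = 0 on I. -/
/-- D_x²[g^{-1/4}] ≡ 0 implies I₉ = (g')⁴/g⁵ is constant; conversely, if g' is
nowhere zero and I₉ is constant then D_x²[g^{-1/4}] ≡ 0. -/
theorem stmt8 (g : ℝ → ℝ) (hg : ContDiff ℝ (⊤ : ℕ∞) g) (a b : ℝ)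
    (hpos : ∀ x ∈ Set.Ioo a b, 0 < g x) :
    ((∀ x ∈ Set.Ioo a b, deriv (deriv (fun t => (g t) ^ (-(1/4 : ℝ)))) x = 0) →
      ∀ x ∈ Set.Ioo a b, ∀ y ∈ Set.Ioo a b,
        (deriv g x) ^ 4 / (g x) ^ 5 = (deriv g y) ^ 4 / (g y) ^ 5) ∧
    ((∀ x ∈ Set.Ioo a b, deriv g x ≠ 0) →
      (∀ x ∈ Set.Ioo a b, ∀ y ∈ Set.Ioo a b,
        (deriv g x) ^ 4 / (g x) ^ 5 = (deriv g y) ^ 4 / (g y) ^ 5) →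
      ∀ x ∈ Set.Ioo a b, deriv (deriv (fun t => (g t) ^ (-(1/4 : ℝ)))) x = 0) := by
  have hginf : ContDiff ℝ ((⊤ : ℕ∞) : WithTop ℕ∞) g := hg.of_le (by simp)
  have hgd : Differentiable ℝ g := hginf.differentiable (by norm_num)
  have hgd' : Differentiable ℝ (deriv g) :=
    ((contDiff_infty_iff_deriv.mp hginf).2).differentiable (by norm_num)
  set F : ℝ → ℝ := fun t => deriv g t * (-(1/4 : ℝ)) * g t ^ ((-(1/4 : ℝ)) - 1) with hFdef
  -- derivative of g^(-1/4) is F on Ioo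
  have hderivh : ∀ x ∈ Set.Ioo a b,
      HasDerivAt (fun t => (g t) ^ (-(1/4 : ℝ))) (F x) x := by
    intro x hx
    exact (hgd.differentiableAt.hasDerivAt).rpow_const (Or.inl (hpos x hx).ne')
  have hopen : IsOpen (Set.Ioo a b) := isOpen_Ioo
  -- near each point of Ioo, deriv h = F
  have heq : ∀ x ∈ Set.Ioo a b,
      deriv (fun t => (g t) ^ (-(1/4 : ℝ))) =ᶠ[nhds x] F := by
    intro x hx
    filter_upwards [hopen.mem_nhds hx] with y hy using (hderivh y hy).deriv
  -- F is differentiable on Ioo, with explicit HasDerivAt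
  have hFdiff : ∀ x ∈ Set.Ioo a b, DifferentiableAt ℝ F x := by
    intro x hx
    have h1 : DifferentiableAt ℝ (fun t => g t ^ ((-(1/4 : ℝ)) - 1)) x :=
      ((hgd.differentiableAt.hasDerivAt).rpow_const (Or.inl (hpos x hx).ne')).differentiableAt
    exact (hgd'.differentiableAt.mul (differentiableAt_const _)).mul h1
  -- key identity: I₉ = 256 * F^4 on Ioo
  have hkey : ∀ x ∈ Set.Ioo a b,
      (deriv g x) ^ 4 / (g x) ^ 5 = 256 * (F x) ^ 4 := by
    intro x hx
    have hgx : 0 < g x := hpos x hx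
    have h5 : (g x ^ ((-(1/4 : ℝ)) - 1)) ^ (4 : ℕ) = (g x ^ (5 : ℕ))⁻¹ := by
      rw [← Real.rpow_natCast (g x ^ ((-(1/4 : ℝ)) - 1)) 4, ← Real.rpow_mul hgx.le,
        show ((-(1/4 : ℝ)) - 1) * ((4 : ℕ) : ℝ) = -(((5 : ℕ) : ℝ)) by norm_num,
        Real.rpow_neg hgx.le, Real.rpow_natCast]
    simp only [hFdef]
    rw [mul_pow, mul_pow, h5]
    field_simp
    ring
  constructor
  · -- forward: deriv F = 0 on Ioo ⇒ F constant ⇒ I₉ constant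
    intro h0 x hx y hy
    have hFconst : F x = F y := by
      apply Convex.is_const_of_fderivWithin_eq_zero (convex_Ioo a b)
        (fun z hz => (hFdiff z hz).differentiableWithinAt) ?_ hx hy
      intro z hz
      rw [fderivWithin_of_isOpen hopen hz]
      have hdz : deriv F z = 0 := by
        rw [← (heq z hz).deriv_eq]; exact h0 z hz
      rw [← toSpanSingleton_deriv, hdz]
      ext
      simp
    rw [hkey x hx, hkey y hy, hFconst]
  · -- converse
    intro hg' hconst x hx
    have hFne : F x ≠ 0 := by
      simp only [hFdef]
      have := (Real.rpow_pos_of_pos (hpos x hx) ((-(1/4 : ℝ)) - 1)).ne'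
      intro h
      rcases mul_eq_zero.mp h with h | h
      · rcases mul_eq_zero.mp h with h | h
        · exact hg' x hx h
        · norm_num at h
      · exact this h
    -- F^4 is locally constant near x
    have hF4 : deriv (fun t => (F t) ^ 4) x = 0 := by
      have : (fun t => (F t) ^ 4) =ᶠ[nhds x] (fun _ => (F x) ^ 4) := by
        filter_upwards [hopen.mem_nhds hx] with y hy
        have : (deriv g y) ^ 4 / (g y) ^ 5 = (deriv g x) ^ 4 / (g x) ^ 5 :=
          hconst y hy x hx
        rw [hkey y hy, hkey x hx] at this
        linarith
      rw [this.deriv_eq, deriv_const]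
    have hchain : deriv (fun t => (F t) ^ 4) x = 4 * (F x) ^ 3 * deriv F x := by
      have := ((hFdiff x hx).hasDerivAt.fun_pow 4).deriv
      rw [this]; ring
    have hderivF : deriv F x = 0 := by
      rw [hchain] at hF4
      have h3 : F x ^ 3 ≠ 0 := pow_ne_zero _ hFne
      have : (4 : ℝ) * F x ^ 3 ≠ 0 := by positivity
      exact (mul_eq_zero.mp hF4).resolve_left this
    rw [(heq x hx).deriv_eq, hderivF]
end

section
/- With D_X = u^{-1/2}·[∂/∂x + p·∂/∂u + (u²/10 − 5g(x)/6)·∂/∂p] on the domain u > 0, and J := g(x)/u², one has D_X(J) + 2·(p/u^{3/2})·J = g'(x)/u^{5/2}; consequently, wherever g > 0, (D_X(J) + 2·(p/u^{3/2})·J)⁴ = J⁵ · (g'(x))⁴/(g(x))⁵. -/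
/-- The invariant total derivative D_X = u^{-1/2}[∂ₓ + p ∂ᵤ + (u²/10 - 5g(x)/6) ∂ₚ]. -/
noncomputable def DX (g : ℝ → ℝ) (F : ℝ → ℝ → ℝ → ℝ) (x u p : ℝ) : ℝ :=
  u ^ (-(1/2 : ℝ)) *
    (deriv (fun s => F s u p) x + p * deriv (fun s => F x s p) u +
      (u ^ 2 / 10 - 5 * g x / 6) * deriv (fun s => F x u s) p)

/-- The syzygy D_X(J) + 2(p/u^{3/2})J = g'/u^{5/2} for J = g/u², and its fourth-power
consequence producing the invariant I₉ = (g')⁴/g⁵. -/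
theorem stmt15 (g : ℝ → ℝ) (hg : ContDiff ℝ (⊤ : ℕ∞) g) :
    ∀ x u p : ℝ, 0 < u →
      (DX g (fun a b _ => g a / b ^ 2) x u p
          + 2 * (p / u ^ ((3:ℝ)/2)) * (g x / u ^ 2) = deriv g x / u ^ ((5:ℝ)/2)) ∧
      (0 < g x →
        (DX g (fun a b _ => g a / b ^ 2) x u p
            + 2 * (p / u ^ ((3:ℝ)/2)) * (g x / u ^ 2)) ^ 4 =
          (g x / u ^ 2) ^ 5 * ((deriv g x) ^ 4 / (g x) ^ 5)) := by
  intro x u p hu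
  have hu0 : u ≠ 0 := ne_of_gt hu
  have h1 : deriv (fun s => g s / u ^ 2) x = deriv g x / u ^ 2 := by
    simp [deriv_div_const]
  have h2 : deriv (fun s : ℝ => g x / s ^ 2) u = -(2 * g x) / u ^ 3 := by
    have : HasDerivAt (fun s : ℝ => g x / s ^ 2) (-(2 * g x) / u ^ 3) u := by
      have h := (hasDerivAt_const u (g x)).div (hasDerivAt_pow 2 u) (by positivity)
      convert h using 1
      any_goals rfl
      field_simp
      ring
    exact this.deriv
  have h3 : deriv (fun _ : ℝ => g x / u ^ 2) p = 0 := deriv_const _ _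
  have key : DX g (fun a b _ => g a / b ^ 2) x u p
      + 2 * (p / u ^ ((3:ℝ)/2)) * (g x / u ^ 2) = deriv g x / u ^ ((5:ℝ)/2) := by
    unfold DX
    rw [h1, h2, h3]
    have e1 : u ^ ((3:ℝ)/2) = u ^ (-(1/2 : ℝ)) * u ^ 2 := by
      rw [← Real.rpow_two, ← Real.rpow_add hu]; norm_num
    have e2 : u ^ ((5:ℝ)/2) = u ^ (-(1/2 : ℝ)) * u ^ 3 := by
      rw [← Real.rpow_natCast u 3, ← Real.rpow_add hu]; norm_num
    have hr : (0:ℝ) < u ^ (-(1/2 : ℝ)) := Real.rpow_pos_of_pos hu _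
    rw [e1, e2]
    have hinv : u ^ (-(1/2 : ℝ)) ≠ 0 := ne_of_gt hr
    have hv2 : u ^ (-(1/2 : ℝ)) * u ^ (-(1/2 : ℝ)) * u = 1 := by
      rw [← Real.rpow_add hu]
      norm_num
      rw [Real.rpow_neg_one]
      exact inv_mul_cancel₀ hu0
    set v := u ^ (-(1/2 : ℝ)) with hv
    field_simp
    linear_combination (60 * (deriv g x * u - 2 * p * g x)) * hv2
  refine ⟨key, fun hgx => ?_⟩
  rw [key]
  have e2 : u ^ ((5:ℝ)/2) = u ^ (-(1/2 : ℝ)) * u ^ 3 := by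
    rw [← Real.rpow_natCast u 3, ← Real.rpow_add hu]; norm_num
  have h10 : (u ^ ((5:ℝ)/2)) ^ 4 = u ^ 10 := by
    rw [← Real.rpow_natCast (u ^ ((5:ℝ)/2)) 4, ← Real.rpow_natCast u 10,
      ← Real.rpow_mul hu.le]
    norm_num
  rw [div_pow, h10]
  have hg0 : g x ≠ 0 := ne_of_gt hgx
  field_simp
end
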